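/- arXiv:math/0312440 — 5 statements merged into one kernel-verified Lean document; each statement's English description precedes it below -/
import Mathlib

section
/- The series ∑_{k≥1} 1/(k!·(k+2)) converges to 1/2. -/
/-! The series telescopes: `1 / ((k + 1)! (k + 3)) = (k + 2) / (k + 3)! = 1 / (k + 2)! - 1 / (k + 3)!`,
so its sum is `1 / 2! = 1 / 2`. -/

open Filter Topology Nat

theorem hasSum_sub_succ_of_antitone {f : ℕ → ℝ} {l : ℝ} (hf : Antitone f)
    (hl : Tendsto f atTop (𝓝 l)) : HasSum (fun n ↦ f n - f (n + 1)) (f 0 - l) := by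
  rw [hasSum_iff_tendsto_nat_of_nonneg fun n ↦ sub_nonneg.2 (hf n.le_succ)]
  simp_rw [Finset.sum_range_sub']
  exact tendsto_const_nhds.sub hl

theorem antitone_inv_factorial : Antitone fun n : ℕ ↦ (n ! : ℝ)⁻¹ := fun _ _ h ↦
  inv_anti₀ (mod_cast factorial_pos _) (mod_cast factorial_le h)

theorem tendsto_inv_factorial_atTop_zero : Tendsto (fun n : ℕ ↦ (n ! : ℝ)⁻¹) atTop (𝓝 0) :=
  tendsto_inv_atTop_zero.comp (tendsto_natCast_atTop_atTop.comp factorial_tendsto_atTop)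

theorem one_div_factorial_mul_add_three (k : ℕ) :
    (1 : ℝ) / ((k + 1)! * (k + 3)) = 1 / (k + 2)! - 1 / (k + 3)! := by
  rw [factorial_succ (k + 2), factorial_succ (k + 1)]
  push_cast
  field_simp
  ring

theorem sum_inv_factorial_mul :
    ∑' k : ℕ, (1 : ℝ) / (Nat.factorial (k + 1) * (k + 3)) = 1 / 2 := by
  have h : HasSum (fun k : ℕ ↦ (1 : ℝ) / (k + 2)! - 1 / (k + 3)!) (1 / 2) := by
    simpa [Function.comp_def, add_assoc] using hasSum_sub_succ_of_antitone
      (antitone_inv_factorial.comp_monotone (monotone_id.add_const 2))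
      (tendsto_inv_factorial_atTop_zero.comp (tendsto_add_atTop_nat 2))
  simpa only [one_div_factorial_mul_add_three] using h.tsum_eq
end

section
/- If p, q, r are integers each ≥ 2 satisfying 1/p + 1/q + 1/r < 1, then 1/p + 1/q + 1/r ≤ 41/42. -/
/-!
Sort `p ≤ q ≤ r`. Unless `(p, q)` is `(2, 2)`, `(2, 3)`, `(2, 4)` or `(3, 3)`, the sum is at most
`9/10`. The case `(2, 2)` violates the hypothesis; in the other three, the hypothesis says `1/r` lies
strictly below `1/6`, `1/4` or `1/3`, so `r` exceeds that denominator by at least one, giving the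
bounds `41/42`, `19/20` and `11/12`.
-/

section ReciprocalGap

variable {K : Type*} [Field K] [LinearOrder K] [IsStrictOrderedRing K]

lemma Int.one_div_le_one_div_of_le {m n : ℤ} (hm : 0 < m) (hmn : m ≤ n) :
    (1 : K) / n ≤ 1 / m :=
  _root_.one_div_le_one_div_of_le (by exact_mod_cast hm) (by exact_mod_cast hmn)

lemma Int.one_div_le_one_div_add_one_of_one_div_lt {k r : ℤ} (hk : 0 < k)
    (h : (1 : K) / r < 1 / k) : (1 : K) / r ≤ 1 / (k + 1) := by
  rcases le_or_gt r 0 with hr | hr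
  · have : (1 : K) / r ≤ 0 := one_div_nonpos.mpr (by exact_mod_cast hr)
    exact this.trans (by positivity)
  · have hkr : k < r := by
      exact_mod_cast (one_div_lt_one_div (by exact_mod_cast hr) (by exact_mod_cast hk)).mp h
    exact_mod_cast Int.one_div_le_one_div_of_le (K := K) (by omega) (Int.add_one_le_of_lt hkr)

end ReciprocalGap

lemma reciprocal_sum_le_of_le_of_le (p q r : ℤ) (hp : 2 ≤ p) (hpq : p ≤ q) (hqr : q ≤ r)
    (h : (1 : ℚ) / p + 1 / q + 1 / r < 1) :
    (1 : ℚ) / p + 1 / q + 1 / r ≤ 41 / 42 := by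
  have hqp : (1 : ℚ) / q ≤ 1 / p := Int.one_div_le_one_div_of_le (by omega) hpq
  have hrq : (1 : ℚ) / r ≤ 1 / q := Int.one_div_le_one_div_of_le (by omega) hqr
  obtain rfl | rfl | hp4 : p = 2 ∨ p = 3 ∨ 4 ≤ p := by omega
  · obtain rfl | rfl | rfl | hq5 : q = 2 ∨ q = 3 ∨ q = 4 ∨ 5 ≤ q := by omega
    · have : (0 : ℚ) < 1 / r := one_div_pos.mpr (by exact_mod_cast (show (0 : ℤ) < r by omega))
      norm_num at h
      linarith
    · have := Int.one_div_le_one_div_add_one_of_one_div_lt (K := ℚ) (k := 6) (r := r)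
        (by norm_num) (by push_cast at h ⊢; linarith)
      push_cast at this ⊢
      linarith
    · have := Int.one_div_le_one_div_add_one_of_one_div_lt (K := ℚ) (k := 4) (r := r)
        (by norm_num) (by push_cast at h ⊢; linarith)
      push_cast at this ⊢
      linarith
    · have : (1 : ℚ) / q ≤ 1 / 5 := Int.one_div_le_one_div_of_le (m := 5) (by norm_num) hq5
      push_cast at this ⊢
      linarith
  · obtain rfl | hq4 : q = 3 ∨ 4 ≤ q := by omega
    · have := Int.one_div_le_one_div_add_one_of_one_div_lt (K := ℚ) (k := 3) (r := r)
        (by norm_num) (by push_cast at h ⊢; linarith)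
      push_cast at this ⊢
      linarith
    · have : (1 : ℚ) / q ≤ 1 / 4 := Int.one_div_le_one_div_of_le (m := 4) (by norm_num) hq4
      push_cast at this ⊢
      linarith
  · have : (1 : ℚ) / p ≤ 1 / 4 := Int.one_div_le_one_div_of_le (m := 4) (by norm_num) hp4
    linarith

theorem reciprocal_sum_gap (p q r : ℤ) (hp : 2 ≤ p) (hq : 2 ≤ q) (hr : 2 ≤ r)
    (h : (1 : ℚ) / p + 1 / q + 1 / r < 1) :
    (1 : ℚ) / p + 1 / q + 1 / r ≤ 41 / 42 := by
  wlog hpq : p ≤ q generalizing p q r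
  · linarith [this q p r hq hp hr (by linarith) (by omega)]
  wlog hqr : q ≤ r generalizing p q r
  · rcases le_total p r with hpr | hrp
    · linarith [this p r q hp hr hq (by linarith) hpr (by omega)]
    · linarith [this r p q hr hp hq (by linarith) hrp hpq]
  exact reciprocal_sum_le_of_le_of_le p q r hp hpq hqr h
end

section
/- For every integer k ≥ 0, setting m = 2ᵏ + 1 and n = m² − 1, the set of prime divisors of m equals the set of prime divisors of n + 1, and the set of prime divisors of n equals the set of prime divisors of m + 1. -/
theorem motzkin_straus_family (k : ℕ) :
    (2^k + 1).primeFactors = ((2^k + 1)^2 - 1 + 1).primeFactors ∧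
    ((2^k + 1)^2 - 1).primeFactors = (2^k + 1 + 1).primeFactors := by
  have hm : 1 ≤ (2^k + 1)^2 := Nat.one_le_pow _ _ (by positivity)
  constructor
  · rw [Nat.sub_add_cancel hm, Nat.primeFactors_pow _ (by norm_num)]
  · have h1 : (2^k + 1)^2 - 1 = 2^k * (2^k + 2) := by
      have e : (2^k + 1)^2 = 2^k * (2^k + 2) + 1 := by ring
      omega
    rw [h1, Nat.primeFactors_mul (by positivity) (by positivity)]
    rcases Nat.eq_zero_or_pos k with hk | hk
    · subst hk; norm_num
    · have h2 : (2^k).primeFactors = {2} := by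
        rw [Nat.primeFactors_pow _ (by omega)]
        exact Nat.prime_two.primeFactors
      rw [h2]
      have h3 : 2 ∈ (2^k + 2).primeFactors := by
        rw [Nat.mem_primeFactors]
        refine ⟨Nat.prime_two, ⟨?_, by positivity⟩⟩
        exact Nat.dvd_add (dvd_pow_self 2 (by omega)) dvd_rfl
      rw [Finset.union_eq_right.mpr (Finset.singleton_subset_iff.mpr h3)]
end

section
/- If the abc conjecture holds with some exponent ε < 1 (i.e., there is κ > 0 such that c ≤ κ·rad(abc)^{1+ε} for all coprime positive integers a + b = c), then there are only finitely many pairs (m, n) of positive integers with m > n such that rad(m+i) = rad(n+i) for i = 0, 1, 2. -/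
/-- The radical of a natural number: product of its distinct prime factors. -/
def rad (n : ℕ) : ℕ := n.primeFactors.prod id

lemma rad_dvd_of_forall_prime {k d : ℕ} (h : ∀ p : ℕ, p.Prime → p ∣ k → p ∣ d) :
    rad k ∣ d := by
  refine Finset.prod_primes_dvd d (fun p hp => ?_) (fun p hp => ?_)
  · exact (Nat.prime_of_mem_primeFactors hp).prime
  · exact h p (Nat.prime_of_mem_primeFactors hp) (Nat.dvd_of_mem_primeFactors hp)

lemma rad_dvd (n : ℕ) : rad n ∣ n := Nat.prod_primeFactors_dvd n

lemma dvd_rad {p n : ℕ} (hp : p.Prime) (h : p ∣ n) (hn : n ≠ 0) : p ∣ rad n :=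
  Finset.dvd_prod_of_mem id (Nat.mem_primeFactors.2 ⟨hp, h, hn⟩)

theorem erdos_woods_from_weak_abc
    (habc : ∃ ε κ : ℝ, 0 < ε ∧ ε < 1 ∧ 0 < κ ∧
      ∀ a b c : ℕ, 0 < a → 0 < b → Nat.Coprime a b → a + b = c →
        (c : ℝ) ≤ κ * (rad (a * b * c) : ℝ) ^ (1 + ε)) :
    {p : ℕ × ℕ | p.2 < p.1 ∧ 0 < p.2 ∧
      ∀ i < 3, rad (p.1 + i) = rad (p.2 + i)}.Finite := by
  obtain ⟨ε, κ, hε, hε1, hκ, H⟩ := habc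
  set C : ℕ := ⌈κ ^ (1 / (1 - ε))⌉₊ with hC
  apply Set.Finite.subset (Set.finite_Icc (0, 0) (C, C))
  rintro ⟨m, n⟩ ⟨hmn, hn, hrad⟩
  simp only [Set.mem_setOf_eq] at hmn hn hrad
  -- it suffices to bound m
  suffices hm : m ≤ C by
    refine ⟨by simp [Prod.le_def], by simp [Prod.le_def]; omega⟩
  have hm0 : 0 < m := lt_trans hn hmn
  -- key divisibility: rad (m*(m+1)*(m+2)) ∣ m - n
  have hdvd : rad (m * (m + 1) * (m + 2)) ∣ m - n := by
    apply rad_dvd_of_forall_prime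
    intro p hp hpk
    have : p ∣ m ∨ p ∣ (m + 1) ∨ p ∣ (m + 2) := by
      rcases (hp.dvd_mul.1 hpk) with h | h
      · rcases hp.dvd_mul.1 h with h | h
        · exact Or.inl h
        · exact Or.inr (Or.inl h)
      · exact Or.inr (Or.inr h)
    have key : ∀ i : ℕ, i < 3 → p ∣ m + i → p ∣ m - n := by
      intro i hi hpmi
      have h1 : p ∣ rad (m + i) := dvd_rad hp hpmi (by omega)
      rw [hrad i hi] at h1
      have h2 : p ∣ n + i := h1.trans (rad_dvd (n + i))
      have h3 : p ∣ (m + i) - (n + i) := Nat.dvd_sub hpmi h2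
      have : (m + i) - (n + i) = m - n := by omega
      rwa [this] at h3
    rcases this with h | h | h
    · exact key 0 (by norm_num) (by simpa using h)
    · exact key 1 (by norm_num) h
    · exact key 2 (by norm_num) h
  have hradle : rad (m * (m + 1) * (m + 2)) ≤ m := by
    have := Nat.le_of_dvd (by omega) hdvd
    omega
  -- apply abc to a = m*(m+2), b = 1, c = (m+1)^2
  have habc' := H (m * (m + 2)) 1 ((m + 1) ^ 2) (by positivity) one_pos
    (Nat.coprime_one_right _) (by ring)
  -- the radical in abc equals rad (m*(m+1)*(m+2))
  have hradeq : rad (m * (m + 2) * 1 * ((m + 1) ^ 2)) = rad (m * (m + 1) * (m + 2)) := by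
    unfold rad
    congr 1
    rw [mul_one, Nat.primeFactors_mul (by positivity) (by positivity),
      Nat.primeFactors_mul (by omega) (by omega),
      Nat.primeFactors_mul (by positivity) (by omega),
      Nat.primeFactors_mul (by omega) (by omega),
      Nat.primeFactors_pow _ (two_ne_zero)]
    ext p
    simp only [Finset.mem_union]
    tauto
  rw [hradeq] at habc'
  set r : ℕ := rad (m * (m + 1) * (m + 2)) with hr
  set x : ℝ := (m : ℝ) with hx
  have hx1 : 1 ≤ x := by simp only [hx]; exact_mod_cast hm0
  have hx0 : 0 < x := lt_of_lt_of_le one_pos hx1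
  push_cast at habc'
  have h1 : ((m : ℝ) + 1) ^ 2 ≤ κ * x ^ (1 + ε) := by
    refine le_trans habc' ?_
    have : (r : ℝ) ^ (1 + ε) ≤ x ^ (1 + ε) := by
      apply Real.rpow_le_rpow (by positivity) (by simp only [hx]; exact_mod_cast hradle) (by linarith)
    nlinarith
  have h2 : x ^ (2 : ℝ) ≤ κ * x ^ (1 + ε) := by
    refine le_trans ?_ h1
    rw [Real.rpow_two]
    nlinarith
  have h3 : x ^ (1 - ε) ≤ κ := by
    have hsplit : x ^ (2 : ℝ) = x ^ (1 + ε) * x ^ (1 - ε) := by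
      rw [← Real.rpow_add hx0]; norm_num
    rw [hsplit] at h2
    have hpos : (0 : ℝ) < x ^ (1 + ε) := Real.rpow_pos_of_pos hx0 _
    calc x ^ (1 - ε) = x ^ (1 + ε) * x ^ (1 - ε) / x ^ (1 + ε) := by field_simp
      _ ≤ κ * x ^ (1 + ε) / x ^ (1 + ε) := by gcongr
      _ = κ := by field_simp
  have h4 : x ≤ κ ^ (1 / (1 - ε)) := by
    have hne : (1 : ℝ) - ε ≠ 0 := by linarith
    have := Real.rpow_le_rpow (Real.rpow_nonneg hx0.le _) h3
      (le_of_lt (div_pos one_pos (by linarith : (0:ℝ) < 1 - ε)))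
    rwa [← Real.rpow_mul hx0.le, mul_one_div_cancel hne, Real.rpow_one] at this
  have : (m : ℝ) ≤ (C : ℝ) := le_trans h4 (Nat.le_ceil _)
  exact_mod_cast this
end

section
/- If m > n > 0 are integers and rad(m+i) = rad(n+i) for i = 0, 1, 2, then rad(m(m+1)(m+2)) divides m − n. -/
theorem rad_dvd_sub (m n : ℕ) (hn : 0 < n) (hnm : n < m)
    (h : ∀ i < 3, rad (m + i) = rad (n + i)) :
    rad (m * (m + 1) * (m + 2)) ∣ m - n := by
  have key : ∀ i < 3, ∀ p : ℕ, p.Prime → p ∣ (m + i) → p ∣ m - n := by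
    intro i hi p hp hpm
    have h1 : rad (m + i) ∣ m + i := Nat.prod_primeFactors_dvd _
    have h2 : rad (n + i) ∣ n + i := Nat.prod_primeFactors_dvd _
    have hpr : p ∣ rad (m + i) := by
      apply Finset.dvd_prod_of_mem id
      exact Nat.mem_primeFactors.2 ⟨hp, hpm, by omega⟩
    have hpn : p ∣ n + i := (h i hi ▸ hpr).trans h2
    have hpm' : p ∣ m + i := hpr.trans h1
    have := Nat.dvd_sub hpm' hpn
    simpa [Nat.add_sub_add_right, show m + i - (n + i) = m - n by omega] using this
  apply Finset.prod_primes_dvd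
  · intro p hp
    exact (Nat.prime_of_mem_primeFactors hp).prime
  · intro p hp
    have hpp := Nat.prime_of_mem_primeFactors hp
    have hpd : p ∣ m * (m + 1) * (m + 2) := Nat.dvd_of_mem_primeFactors hp

    rcases (Nat.Prime.dvd_mul hpp).1 hpd with h' | h'
    · rcases (Nat.Prime.dvd_mul hpp).1 h' with h'' | h''
      · exact key 0 (by norm_num) p hpp (by simpa using h'')
      · exact key 1 (by norm_num) p hpp h''
    · exact key 2 (by norm_num) p hpp h'
end
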